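/- arXiv:math/0309044 — 2 statements merged into one kernel-verified Lean document; each statement's English description precedes it below -/
import Mathlib

section
/- Let γ ∈ (0,1) and t = log 2 / (−log γ). The t-dimensional Hausdorff measure of the compact metric space (C, δ_γ) satisfies (1−γ)^t ≤ H^t(C) ≤ 1. -/
open MeasureTheory
open scoped ENNReal NNReal

/-- The Cantor set `∏_{n∈ℕ} {0,1}` (a bare type synonym, to be equipped with the metric `δ_γ`). -/
def Cantor : Type := ℕ → Fin 2

/-- The metric `δ_γ` on the Cantor set: `δ_γ(x,y) = (1−γ)·∑_{n=0}^∞ |x(n) − y(n)|·γ^n`. -/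
noncomputable def cantorDist (γ : ℝ) (x y : Cantor) : ℝ :=
  (1 - γ) * ∑' n : ℕ, |((x n : ℕ) : ℝ) - ((y n : ℕ) : ℝ)| * γ ^ n

lemma fin2_abs_le (a b : Fin 2) : |((a : ℕ) : ℝ) - ((b : ℕ) : ℝ)| ≤ 1 := by
  fin_cases a <;> fin_cases b <;> norm_num

lemma fin2_abs_eq {a b : Fin 2} (h : a ≠ b) : |((a : ℕ) : ℝ) - ((b : ℕ) : ℝ)| = 1 := by
  fin_cases a <;> fin_cases b <;> simp_all <;> norm_num

lemma cantor_summable {γ : ℝ} (hγ0 : 0 ≤ γ) (hγ1 : γ < 1) (x y : Cantor) :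
    Summable (fun n : ℕ => |((x n : ℕ) : ℝ) - ((y n : ℕ) : ℝ)| * γ ^ n) := by
  refine Summable.of_nonneg_of_le (fun n => mul_nonneg (abs_nonneg _) (pow_nonneg hγ0 n))
    (fun n => ?_) (summable_geometric_of_lt_one hγ0 hγ1)
  calc |((x n : ℕ) : ℝ) - ((y n : ℕ) : ℝ)| * γ ^ n ≤ 1 * γ ^ n :=
        mul_le_mul_of_nonneg_right (fin2_abs_le _ _) (pow_nonneg hγ0 n)
    _ = γ ^ n := one_mul _

lemma cantorDist_le {γ : ℝ} (hγ0 : 0 ≤ γ) (hγ1 : γ < 1) {x y : Cantor} {n : ℕ}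
    (h : ∀ k, k < n → x k = y k) : cantorDist γ x y ≤ γ ^ n := by
  have hsum := cantor_summable hγ0 hγ1 x y
  set f : ℕ → ℝ := fun k => |((x k : ℕ) : ℝ) - ((y k : ℕ) : ℝ)| * γ ^ k with hf
  have h1 : ∑' k, f k = ∑' k, f (k + n) := by
    rw [← Summable.sum_add_tsum_nat_add n hsum]
    have hz : ∀ i ∈ Finset.range n, f i = 0 := by
      intro i hi
      simp [hf, h i (Finset.mem_range.1 hi)]
    rw [Finset.sum_eq_zero hz, zero_add]
  have h2 : ∑' k, f (k + n) ≤ ∑' k : ℕ, γ ^ (k + n) := by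
    refine Summable.tsum_le_tsum (fun k => ?_) ((summable_nat_add_iff n).2 hsum)
      ((summable_nat_add_iff n).2 (summable_geometric_of_lt_one hγ0 hγ1))
    calc f (k + n) ≤ 1 * γ ^ (k + n) :=
          mul_le_mul_of_nonneg_right (fin2_abs_le _ _) (pow_nonneg hγ0 _)
      _ = γ ^ (k + n) := one_mul _
  have h3 : ∑' k : ℕ, γ ^ (k + n) = (1 - γ)⁻¹ * γ ^ n := by
    simp_rw [pow_add]
    rw [tsum_mul_right, tsum_geometric_of_lt_one hγ0 hγ1]
  have h1γ : (0:ℝ) < 1 - γ := by linarith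
  unfold cantorDist
  calc (1 - γ) * ∑' k, f k ≤ (1 - γ) * ((1 - γ)⁻¹ * γ ^ n) := by
        refine mul_le_mul_of_nonneg_left ?_ h1γ.le
        rw [h1]
        exact h2.trans (le_of_eq h3)
    _ = γ ^ n := by field_simp

lemma cantorDist_ge {γ : ℝ} (hγ0 : 0 ≤ γ) (hγ1 : γ < 1) {x y : Cantor} {k : ℕ}
    (h : x k ≠ y k) : (1 - γ) * γ ^ k ≤ cantorDist γ x y := by
  have hsum := cantor_summable hγ0 hγ1 x y
  have h2 : γ ^ k ≤ ∑' n, |((x n : ℕ) : ℝ) - ((y n : ℕ) : ℝ)| * γ ^ n := by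
    have := Summable.le_tsum hsum k (fun j _ => mul_nonneg (abs_nonneg _) (pow_nonneg hγ0 _))
    rwa [fin2_abs_eq h, one_mul] at this
  have h1γ : (0:ℝ) ≤ 1 - γ := by linarith
  exact mul_le_mul_of_nonneg_left h2 h1γ

/-- The cylinder of depth `n` around `x`. -/
def cylSet (x : Cantor) (n : ℕ) : Set Cantor := {y | ∀ k, k < n → y k = x k}

/-- The point of the Cantor set extending a finite word by zeros. -/
def wordPoint (n : ℕ) (w : Fin n → Fin 2) : Cantor :=
  fun k => if h : k < n then w ⟨k, h⟩ else 0

/-- For `γ ∈ (0,1)` and `t = log 2 / (−log γ)`, the `t`-dimensional Hausdorff measure of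
the compact metric space `(C, δ_γ)` satisfies `(1−γ)^t ≤ H^t(C) ≤ 1`. -/
theorem hausdorff_measure_cantor (γ t : ℝ) (hγ : γ ∈ Set.Ioo (0 : ℝ) 1)
    (ht : t = Real.log 2 / (-Real.log γ))
    (M : MetricSpace Cantor)
    (hM : ∀ x y : Cantor, M.toPseudoMetricSpace.toDist.dist x y = cantorDist γ x y) :
    letI := M
    letI : MeasurableSpace Cantor := borel _
    haveI : BorelSpace Cantor := ⟨rfl⟩
    ENNReal.ofReal ((1 - γ) ^ t) ≤ μH[t] (Set.univ : Set Cantor) ∧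
      μH[t] (Set.univ : Set Cantor) ≤ 1 := by
  obtain ⟨hγ0, hγ1⟩ := hγ
  letI := M
  letI : MeasurableSpace Cantor := borel _
  haveI : BorelSpace Cantor := ⟨rfl⟩
  have hdist : ∀ x y : Cantor, dist x y = cantorDist γ x y := hM
  have h1γ : (0:ℝ) < 1 - γ := by linarith
  -- basic facts about the exponent
  have hlog : Real.log γ < 0 := Real.log_neg hγ0 hγ1
  have ht0 : 0 < t := by
    rw [ht]
    exact div_pos (Real.log_pos one_lt_two) (by linarith)
  have hγt : γ ^ t = 2⁻¹ := by
    rw [ht, Real.rpow_def_of_pos hγ0]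
    have hne : Real.log γ ≠ 0 := ne_of_lt hlog
    have : Real.log γ * (Real.log 2 / -Real.log γ) = -Real.log 2 := by
      rw [div_neg, mul_neg, mul_comm, div_mul_cancel₀ _ hne]
    rw [this, Real.exp_neg, Real.exp_log two_pos]
  have hpow : ∀ n : ℕ, (γ ^ n) ^ t = (2⁻¹ : ℝ) ^ n := by
    intro n
    rw [← Real.rpow_natCast γ n, ← Real.rpow_mul hγ0.le, mul_comm,
      Real.rpow_mul hγ0.le, hγt, Real.rpow_natCast]
  -- metric facts
  have hdist_le : ∀ (x y : Cantor) (n : ℕ), (∀ k, k < n → x k = y k) → dist x y ≤ γ ^ n := by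
    intro x y n h
    rw [hdist]
    exact cantorDist_le hγ0.le hγ1 h
  have hdist_ge : ∀ (x y : Cantor) (k : ℕ), x k ≠ y k → (1 - γ) * γ ^ k ≤ dist x y := by
    intro x y k h
    rw [hdist]
    exact cantorDist_ge hγ0.le hγ1 h
  have hcyl_diam : ∀ (x : Cantor) (n : ℕ),
      EMetric.diam (cylSet x n) ≤ ENNReal.ofReal (γ ^ n) := by
    intro x n
    refine EMetric.diam_le fun y hy z hz => ?_
    rw [edist_dist]
    refine ENNReal.ofReal_le_ofReal (hdist_le y z n fun k hk => ?_)
    rw [hy k hk, hz k hk]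
  have hcyl_open : ∀ (x : Cantor) (n : ℕ), IsOpen (cylSet x n) := by
    intro x n
    rw [Metric.isOpen_iff]
    intro y hy
    refine ⟨(1 - γ) * γ ^ n, by positivity, fun z hz => ?_⟩
    rw [Metric.mem_ball] at hz
    intro k hk
    by_contra hne
    have h1 : (1 - γ) * γ ^ k ≤ dist z y := hdist_ge z y k (fun h => hne (h ▸ hy k hk ▸ rfl))
    have h2 : γ ^ n ≤ γ ^ k := pow_le_pow_of_le_one hγ0.le hγ1.le (le_of_lt hk)
    nlinarith [hz]
  -- separation: small diameter forces agreement of coordinates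
  have hsep : ∀ (s : Set Cantor) (x y : Cantor) (n : ℕ), x ∈ s → y ∈ s →
      EMetric.diam s < ENNReal.ofReal ((1 - γ) * γ ^ n) → ∀ k, k ≤ n → x k = y k := by
    intro s x y n hx hy hd k hk
    by_contra hne
    have h1 : (1 - γ) * γ ^ k ≤ dist x y := hdist_ge x y k hne
    have h2 : γ ^ n ≤ γ ^ k := pow_le_pow_of_le_one hγ0.le hγ1.le hk
    have h3 : ENNReal.ofReal ((1 - γ) * γ ^ n) ≤ edist x y := by
      rw [edist_dist]
      refine ENNReal.ofReal_le_ofReal ?_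
      nlinarith
    exact absurd (le_trans h3 (EMetric.edist_le_diam_of_mem hx hy)) (not_le.2 hd)
  -- compactness
  have hcompact : IsCompact (Set.univ : Set Cantor) := by
    let ι : (ℕ → Fin 2) → Cantor := fun x => x
    have hcont : Continuous ι := by
      rw [continuous_iff_continuousAt]
      intro x
      rw [ContinuousAt, Metric.tendsto_nhds]
      intro ε hε
      obtain ⟨n, hn⟩ := exists_pow_lt_of_lt_one hε hγ1
      have heq : {y : ℕ → Fin 2 | ∀ k ∈ Finset.range n, y k = x k} =
          ⋂ k ∈ Finset.range n, (fun y : ℕ → Fin 2 => y k) ⁻¹' {x k} := by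
        ext y; simp
      have hV : IsOpen {y : ℕ → Fin 2 | ∀ k ∈ Finset.range n, y k = x k} := by
        rw [heq]
        exact isOpen_biInter_finset fun k _ =>
          (continuous_apply k).isOpen_preimage _ (isOpen_discrete _)
      filter_upwards [hV.mem_nhds (by simp)] with y hy
      have hle : dist (ι y) (ι x) ≤ γ ^ n :=
        hdist_le (ι y) (ι x) n fun k hk => hy k (Finset.mem_range.2 hk)
      exact lt_of_le_of_lt hle hn
    have himg : (Set.univ : Set Cantor) = ι '' Set.univ := by
      rw [Set.image_univ]
      exact (Set.range_eq_univ.2 fun y => ⟨y, rfl⟩).symm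
    rw [himg]
    exact isCompact_univ.image hcont
  constructor
  · -- lower bound
    have hlow : ∀ S : ℕ → Set Cantor, Set.univ ⊆ ⋃ i, S i →
        ENNReal.ofReal ((1 - γ) ^ t) ≤
          ∑' i, ⨆ _ : (S i).Nonempty, EMetric.diam (S i) ^ t := by
      intro S hS
      set c := ENNReal.ofReal ((1 - γ) ^ t) with hc
      have hcpos : 0 < c := ENNReal.ofReal_pos.2 (Real.rpow_pos_of_pos h1γ t)
      have hctop : c ≠ ∞ := ENNReal.ofReal_ne_top
      set term : ℕ → ℝ≥0∞ := fun i => ⨆ _ : (S i).Nonempty, EMetric.diam (S i) ^ t with hterm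
      refine ENNReal.le_of_forall_pos_le_add fun ε hε hfin => ?_
      have hεne : (ε : ℝ≥0∞) ≠ 0 := by
        simpa using hε.ne'
      obtain ⟨k, hk⟩ := ENNReal.exists_inv_two_pow_lt
        (show (ε : ℝ≥0∞) / (c * 2) ≠ 0 from
          (ENNReal.div_pos hεne (ENNReal.mul_ne_top hctop ENNReal.ofNat_ne_top)).ne')
      -- choose cylinders
      have hchoice : ∀ i : ℕ, ∃ (m : ℕ) (x : Cantor), S i ⊆ cylSet x m ∧
          c * ((2 : ℝ≥0∞) ^ m)⁻¹ ≤ term i + c * 2⁻¹ ^ k * 2⁻¹ ^ i := by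
        intro i
        have hsplit : ((2 : ℝ≥0∞) ^ (k + i))⁻¹ = 2⁻¹ ^ k * 2⁻¹ ^ i := by
          rw [pow_add, ENNReal.mul_inv (Or.inl (by positivity)) (Or.inl (by simp)),
            ENNReal.inv_pow, ENNReal.inv_pow]
        rcases Set.eq_empty_or_nonempty (S i) with hSi | hSi
        · refine ⟨k + i, fun _ => 0, by simp [hSi], ?_⟩
          rw [hsplit, ← mul_assoc]
          exact le_add_self
        · by_cases hd : EMetric.diam (S i) = 0
          · refine ⟨k + i, hSi.choose, ?_, ?_⟩
            · intro y hy j _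
              have hsub : (S i).Subsingleton := EMetric.diam_eq_zero_iff.1 hd
              rw [hsub hy hSi.choose_spec]
            · rw [hsplit, ← mul_assoc]
              exact le_add_self
          · have hdpos : 0 < EMetric.diam (S i) := pos_iff_ne_zero.2 hd
            have hex : ∃ n : ℕ, ENNReal.ofReal ((1 - γ) * γ ^ n) ≤ EMetric.diam (S i) := by
              rcases eq_top_or_lt_top (EMetric.diam (S i)) with htop | hlt
              · exact ⟨0, htop ▸ le_top⟩
              · have h0 : 0 < (EMetric.diam (S i)).toReal := ENNReal.toReal_pos hd hlt.ne
                obtain ⟨n, hn⟩ :=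
                  exists_pow_lt_of_lt_one (div_pos h0 h1γ) hγ1
                refine ⟨n, ?_⟩
                have : (1 - γ) * γ ^ n ≤ (EMetric.diam (S i)).toReal := by
                  rw [lt_div_iff₀ h1γ] at hn
                  nlinarith
                calc ENNReal.ofReal ((1 - γ) * γ ^ n) ≤
                    ENNReal.ofReal (EMetric.diam (S i)).toReal := ENNReal.ofReal_le_ofReal this
                  _ = EMetric.diam (S i) := ENNReal.ofReal_toReal hlt.ne
            refine ⟨Nat.find hex, hSi.choose, ?_, ?_⟩
            · -- subset of the cylinder
              cases hn : Nat.find hex with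
              | zero => intro y hy j hj; omega
              | succ n' =>
                have hmin : ¬ ENNReal.ofReal ((1 - γ) * γ ^ n') ≤ EMetric.diam (S i) := by
                  have := Nat.find_min hex (m := n') (by omega)
                  exact this
                intro y hy j hj
                exact hsep (S i) y hSi.choose n' hy hSi.choose_spec (not_le.1 hmin) j (by omega)
            · -- measure bound
              set n := Nat.find hex with hn
              have hfind : ENNReal.ofReal ((1 - γ) * γ ^ n) ≤ EMetric.diam (S i) :=
                Nat.find_spec hex
              have h2 : ((2:ℝ≥0∞) ^ n)⁻¹ = ENNReal.ofReal ((γ ^ n) ^ t) := by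
                rw [hpow n, ENNReal.ofReal_pow (by norm_num), ENNReal.ofReal_inv_of_pos two_pos,
                  ENNReal.ofReal_ofNat, ENNReal.inv_pow]
              calc c * ((2:ℝ≥0∞) ^ n)⁻¹ = ENNReal.ofReal ((1 - γ) ^ t * (γ ^ n) ^ t) := by
                    rw [h2, hc, ← ENNReal.ofReal_mul (Real.rpow_nonneg h1γ.le t)]
                _ = ENNReal.ofReal (((1 - γ) * γ ^ n) ^ t) := by
                    rw [← Real.mul_rpow h1γ.le (pow_nonneg hγ0.le n)]
                _ = ENNReal.ofReal ((1 - γ) * γ ^ n) ^ t :=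
                    (ENNReal.ofReal_rpow_of_pos (by positivity)).symm
                _ ≤ EMetric.diam (S i) ^ t := ENNReal.rpow_le_rpow hfind ht0.le
                _ = term i := by
                    have h5 : term i = ⨆ _ : (S i).Nonempty, EMetric.diam (S i) ^ t := by
                      rw [hterm]
                    rw [h5, iSup_pos hSi]
                _ ≤ term i + c * 2⁻¹ ^ k * 2⁻¹ ^ i := le_self_add
      choose m xs hsub hbound using hchoice
      -- finite subcover by cylinders
      have hcover : Set.univ ⊆ ⋃ i, cylSet (xs i) (m i) := by
        intro y hy
        obtain ⟨i, hi⟩ := Set.mem_iUnion.1 (hS hy)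
        exact Set.mem_iUnion.2 ⟨i, hsub i hi⟩
      obtain ⟨F, hF⟩ := hcompact.elim_finite_subcover _
        (fun i => hcyl_open (xs i) (m i)) hcover
      -- the counting argument
      have hcount : (1 : ℝ≥0∞) ≤ ∑ i ∈ F, ((2:ℝ≥0∞) ^ m i)⁻¹ := by
        set N := F.sup m with hN
        have hmN : ∀ i ∈ F, m i ≤ N := fun i hi => Finset.le_sup hi
        have hptcov : ∀ w : Fin N → Fin 2, ∃ i ∈ F, wordPoint N w ∈ cylSet (xs i) (m i) := by
          intro w
          have := hF (Set.mem_univ (wordPoint N w))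
          simp only [Set.mem_iUnion, exists_prop] at this
          exact this
        choose g hgF hgmem using hptcov
        have hnat : (2:ℕ) ^ N ≤ ∑ i ∈ F, 2 ^ (N - m i) := by
          classical
          have h1 : (Finset.univ : Finset (Fin N → Fin 2)).card =
              ∑ i ∈ F, (Finset.univ.filter (fun w => g w = i)).card :=
            Finset.card_eq_sum_card_fiberwise (fun w _ => hgF w)
          have h2 : ∀ i ∈ F, (Finset.univ.filter (fun w : Fin N → Fin 2 => g w = i)).card ≤
              2 ^ (N - m i) := by
            intro i hi
            have hcard : ((Finset.univ : Finset (Fin (N - m i) → Fin 2))).card = 2 ^ (N - m i) := by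
              simp [Finset.card_univ]
            rw [← hcard]
            refine Finset.card_le_card_of_injOn
              (fun w (j : Fin (N - m i)) => w ⟨m i + j, by have := j.isLt; omega⟩)
              (fun _ _ => Finset.mem_univ _) ?_
            intro w1 hw1 w2 hw2 heq
            simp only [Finset.coe_filter, Set.mem_setOf_eq, Finset.mem_univ, true_and] at hw1 hw2
            have hv1 := hgmem w1; rw [hw1] at hv1
            have hv2 := hgmem w2; rw [hw2] at hv2
            funext j
            by_cases hj : (j : ℕ) < m i
            · have e1 : wordPoint N w1 (j : ℕ) = xs i (j : ℕ) := hv1 (j : ℕ) hj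
              have e2 : wordPoint N w2 (j : ℕ) = xs i (j : ℕ) := hv2 (j : ℕ) hj
              unfold wordPoint at e1 e2
              rw [dif_pos j.isLt] at e1 e2
              simpa using e1.trans e2.symm
            · have hjm : m i ≤ (j : ℕ) := le_of_not_gt hj
              have hjlt : (j : ℕ) - m i < N - m i := by have := j.isLt; omega
              have := congrFun heq ⟨(j : ℕ) - m i, hjlt⟩
              simp only at this
              have harg : (⟨m i + ((j : ℕ) - m i), by have := j.isLt; omega⟩ : Fin N) = j := by
                apply Fin.ext; simp; omega
              rwa [harg] at this
          calc (2:ℕ) ^ N = (Finset.univ : Finset (Fin N → Fin 2)).card := by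
                simp [Finset.card_univ]
            _ = ∑ i ∈ F, (Finset.univ.filter (fun w => g w = i)).card := h1
            _ ≤ ∑ i ∈ F, 2 ^ (N - m i) := Finset.sum_le_sum h2
        have hcast : ((2:ℝ≥0∞)) ^ N ≤ ∑ i ∈ F, (2:ℝ≥0∞) ^ (N - m i) := by
          have := (Nat.cast_le (α := ℝ≥0∞)).2 hnat
          push_cast at this
          exact this
        have hsum2 : ∑ i ∈ F, (2:ℝ≥0∞) ^ (N - m i) = 2 ^ N * ∑ i ∈ F, ((2:ℝ≥0∞) ^ m i)⁻¹ := by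
          rw [Finset.mul_sum]
          refine Finset.sum_congr rfl fun i hi => ?_
          have h2ne : ((2:ℝ≥0∞) ^ m i) ≠ 0 := by positivity
          have h2net : ((2:ℝ≥0∞) ^ m i) ≠ ∞ := by
            exact ENNReal.pow_ne_top ENNReal.ofNat_ne_top
          have hsplit : (2:ℝ≥0∞) ^ N = 2 ^ (N - m i) * 2 ^ m i := by
            rw [← pow_add, Nat.sub_add_cancel (hmN i hi)]
          rw [hsplit, mul_assoc, ENNReal.mul_inv_cancel h2ne h2net, mul_one]
        rw [hsum2] at hcast
        have h2Nne : ((2:ℝ≥0∞) ^ N) ≠ 0 := by positivity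
        have h2Nnet : ((2:ℝ≥0∞) ^ N) ≠ ∞ := ENNReal.pow_ne_top ENNReal.ofNat_ne_top
        have := (ENNReal.mul_le_mul_iff_right h2Nne h2Nnet).1 (by rwa [mul_one] : (2:ℝ≥0∞) ^ N * 1 ≤ 2 ^ N * ∑ i ∈ F, ((2:ℝ≥0∞) ^ m i)⁻¹)
        exact this
      -- assemble
      have hgeom : ∑' i : ℕ, ((2:ℝ≥0∞)⁻¹) ^ i = 2 := by
        rw [ENNReal.tsum_geometric, ENNReal.one_sub_inv_two, inv_inv]
      have hεbound : c * 2⁻¹ ^ k * 2 ≤ (ε : ℝ≥0∞) := by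
        calc c * 2⁻¹ ^ k * 2 = (c * 2) * 2⁻¹ ^ k := by ring
          _ ≤ (c * 2) * ((ε : ℝ≥0∞) / (c * 2)) := mul_le_mul_right hk.le _
          _ ≤ (ε : ℝ≥0∞) := ENNReal.mul_div_le
      calc c = c * 1 := (mul_one c).symm
        _ ≤ c * ∑ i ∈ F, ((2:ℝ≥0∞) ^ m i)⁻¹ := mul_le_mul_right hcount c
        _ = ∑ i ∈ F, c * ((2:ℝ≥0∞) ^ m i)⁻¹ := Finset.mul_sum _ _ _
        _ ≤ ∑ i ∈ F, (term i + c * 2⁻¹ ^ k * 2⁻¹ ^ i) := Finset.sum_le_sum fun i _ => hbound i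
        _ ≤ ∑' i, (term i + c * 2⁻¹ ^ k * 2⁻¹ ^ i) := ENNReal.sum_le_tsum F
        _ = ∑' i, term i + c * 2⁻¹ ^ k * ∑' i : ℕ, ((2:ℝ≥0∞)⁻¹) ^ i := by
            rw [ENNReal.tsum_add, ENNReal.tsum_mul_left]
        _ = ∑' i, term i + c * 2⁻¹ ^ k * 2 := by rw [hgeom]
        _ ≤ ∑' i, term i + (ε : ℝ≥0∞) := add_le_add_right hεbound _
    rw [MeasureTheory.Measure.hausdorffMeasure_apply]
    exact le_iSup₂_of_le 1 zero_lt_one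
      (le_iInf fun S => le_iInf fun hS => le_iInf fun _ => hlow S hS)
  · -- upper bound
    have hub := MeasureTheory.Measure.hausdorffMeasure_le_liminf_sum (X := Cantor) t Set.univ
      (l := Filter.atTop) (fun n : ℕ => ENNReal.ofReal (γ ^ n))
      (by
        have h0 : Filter.Tendsto (fun n : ℕ => γ ^ n) Filter.atTop (nhds 0) :=
          tendsto_pow_atTop_nhds_zero_of_lt_one hγ0.le hγ1
        have := (ENNReal.continuous_ofReal.tendsto 0).comp h0
        simpa [Function.comp_def] using this)
      (fun n w => cylSet (wordPoint n w) n)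
      (Filter.Eventually.of_forall fun n w => hcyl_diam _ _)
      (Filter.Eventually.of_forall fun n => by
        intro y _
        refine Set.mem_iUnion.2 ⟨fun j => y (j : ℕ), fun k hk => ?_⟩
        unfold wordPoint
        rw [dif_pos hk])
    refine le_trans hub ?_
    have hone : ∀ n : ℕ,
        ∑ w : Fin n → Fin 2, EMetric.diam (cylSet (wordPoint n w) n) ^ t ≤ 1 := by
      intro n
      have hterm : ∀ w : Fin n → Fin 2,
          EMetric.diam (cylSet (wordPoint n w) n) ^ t ≤ ((2:ℝ≥0∞) ^ n)⁻¹ := by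
        intro w
        have h1 : EMetric.diam (cylSet (wordPoint n w) n) ^ t ≤ ENNReal.ofReal (γ ^ n) ^ t :=
          ENNReal.rpow_le_rpow (hcyl_diam _ _) ht0.le
        have h2 : ENNReal.ofReal (γ ^ n) ^ t = ((2:ℝ≥0∞) ^ n)⁻¹ := by
          rw [ENNReal.ofReal_rpow_of_pos (pow_pos hγ0 n), hpow n,
            ENNReal.ofReal_pow (by norm_num), ENNReal.ofReal_inv_of_pos two_pos,
            ENNReal.ofReal_ofNat, ENNReal.inv_pow]
        rw [h2] at h1
        exact h1
      calc ∑ w : Fin n → Fin 2, EMetric.diam (cylSet (wordPoint n w) n) ^ t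
          ≤ ∑ _w : Fin n → Fin 2, ((2:ℝ≥0∞) ^ n)⁻¹ := Finset.sum_le_sum fun w _ => hterm w
        _ = ((2:ℕ) ^ n : ℕ) • ((2:ℝ≥0∞) ^ n)⁻¹ := by
            rw [Finset.sum_const, Finset.card_univ]
            simp
        _ = (2:ℝ≥0∞) ^ n * ((2:ℝ≥0∞) ^ n)⁻¹ := by
            rw [nsmul_eq_mul]
            push_cast
            ring
        _ = 1 := ENNReal.mul_inv_cancel (by positivity) (ENNReal.pow_ne_top ENNReal.ofNat_ne_top)
    calc Filter.liminf
          (fun n => ∑ w : Fin n → Fin 2, EMetric.diam (cylSet (wordPoint n w) n) ^ t)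
          Filter.atTop
        ≤ Filter.liminf (fun _ : ℕ => (1:ℝ≥0∞)) Filter.atTop :=
          Filter.liminf_le_liminf (Filter.Eventually.of_forall hone)
      _ = 1 := Filter.liminf_const 1
end

section
/- For 0 < μ < γ < 1, the Gromov–Hausdorff distance between the compact metric spaces (C, δ_γ) and (C, δ_μ) is at most 2·(γ − μ)/(1 − γ). -/
lemma cantor_key (γ μ : ℝ) (hμ0 : 0 < μ) (hμγ : μ < γ) (hγ1 : γ < 1) (x y : Cantor) :
    |cantorDist γ x y - cantorDist μ x y| ≤ 4 * (γ - μ) / (1 - γ) := by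
  have hγ0 : (0:ℝ) < γ := hμ0.trans hμγ
  have hμ1 : μ < 1 := hμγ.trans hγ1
  set a : ℕ → ℝ := fun n => |((x n : ℕ) : ℝ) - ((y n : ℕ) : ℝ)| with ha
  have ha0 : ∀ n, 0 ≤ a n := fun n => abs_nonneg _
  have ha1 : ∀ n, a n ≤ 1 := by
    intro n
    have hx : ((x n : ℕ) : ℝ) ≤ 1 := by
      exact_mod_cast Nat.le_of_lt_succ (x n).isLt
    have hy : ((y n : ℕ) : ℝ) ≤ 1 := by
      exact_mod_cast Nat.le_of_lt_succ (y n).isLt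
    have hx0 : (0:ℝ) ≤ ((x n : ℕ) : ℝ) := Nat.cast_nonneg _
    have hy0 : (0:ℝ) ≤ ((y n : ℕ) : ℝ) := Nat.cast_nonneg _
    exact abs_le.mpr ⟨by linarith, by linarith⟩
  have sum_t : ∀ t : ℝ, 0 ≤ t → t < 1 → Summable (fun n => a n * t ^ n) := by
    intro t ht0 ht1
    refine Summable.of_nonneg_of_le (fun n => mul_nonneg (ha0 n) (pow_nonneg ht0 n))
      (fun n => mul_le_of_le_one_left (pow_nonneg ht0 n) (ha1 n))
      (summable_geometric_of_lt_one ht0 ht1)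
  have Sle : ∀ t : ℝ, 0 ≤ t → t < 1 → (∑' n, a n * t ^ n) ≤ (1 - t)⁻¹ := by
    intro t ht0 ht1
    calc (∑' n, a n * t ^ n) ≤ ∑' n, t ^ n :=
          Summable.tsum_le_tsum (fun n => mul_le_of_le_one_left (pow_nonneg ht0 n) (ha1 n))
            (sum_t t ht0 ht1) (summable_geometric_of_lt_one ht0 ht1)
      _ = (1 - t)⁻¹ := tsum_geometric_of_lt_one ht0 ht1
  have hSγ := sum_t γ hγ0.le hγ1
  have hSμ := sum_t μ hμ0.le hμ1
  have hS0 : 0 ≤ ∑' n, a n * μ ^ n :=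
    tsum_nonneg fun n => mul_nonneg (ha0 n) (pow_nonneg hμ0.le n)
  have hmono : (∑' n, a n * μ ^ n) ≤ ∑' n, a n * γ ^ n :=
    Summable.tsum_le_tsum (fun n => mul_le_mul_of_nonneg_left
      (pow_le_pow_left₀ hμ0.le hμγ.le n) (ha0 n)) hSμ hSγ
  have hdiffle : (∑' n, a n * γ ^ n) - (∑' n, a n * μ ^ n) ≤ (1 - γ)⁻¹ - (1 - μ)⁻¹ := by
    have h1 : (∑' n, a n * γ ^ n) - (∑' n, a n * μ ^ n)
        = ∑' n, (a n * γ ^ n - a n * μ ^ n) := (Summable.tsum_sub hSγ hSμ).symm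
    have h2 : (∑' n, (a n * γ ^ n - a n * μ ^ n)) ≤ ∑' n, ((γ:ℝ) ^ n - μ ^ n) := by
      refine Summable.tsum_le_tsum (fun n => ?_) (hSγ.sub hSμ)
        ((summable_geometric_of_lt_one hγ0.le hγ1).sub
          (summable_geometric_of_lt_one hμ0.le hμ1))
      have := pow_le_pow_left₀ hμ0.le hμγ.le n
      have hgn : (0:ℝ) ≤ γ ^ n - μ ^ n := by linarith
      calc a n * γ ^ n - a n * μ ^ n = a n * (γ ^ n - μ ^ n) := by ring
        _ ≤ 1 * (γ ^ n - μ ^ n) := mul_le_mul_of_nonneg_right (ha1 n) hgn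
        _ = γ ^ n - μ ^ n := one_mul _
    have h3 : (∑' n, ((γ:ℝ) ^ n - μ ^ n)) = (1 - γ)⁻¹ - (1 - μ)⁻¹ := by
      rw [Summable.tsum_sub (summable_geometric_of_lt_one hγ0.le hγ1)
        (summable_geometric_of_lt_one hμ0.le hμ1),
        tsum_geometric_of_lt_one hγ0.le hγ1, tsum_geometric_of_lt_one hμ0.le hμ1]
    rw [h1]; rw [h3] at h2; exact h2
  have hSμle : (∑' n, a n * μ ^ n) ≤ (1 - μ)⁻¹ := Sle μ hμ0.le hμ1
  set A : ℝ := (∑' n, a n * γ ^ n) - (∑' n, a n * μ ^ n) with hA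
  set B : ℝ := (∑' n, a n * μ ^ n) with hB
  have hAB : cantorDist γ x y - cantorDist μ x y = (1 - γ) * A - (γ - μ) * B := by
    simp only [cantorDist, hA, hB, ha]; ring
  have hA0 : 0 ≤ A := by simp only [hA]; linarith
  have h1γ : (0:ℝ) < 1 - γ := by linarith
  have h1μ : (0:ℝ) < 1 - μ := by linarith
  have hiγ : (1 - γ) * (1 - γ)⁻¹ = 1 := mul_inv_cancel₀ h1γ.ne'
  have hiμ : (1 - μ) * (1 - μ)⁻¹ = 1 := mul_inv_cancel₀ h1μ.ne'
  rw [hAB, abs_le]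
  have hgoal : 4 * (γ - μ) / (1 - γ) = 4 * (γ - μ) * (1 - γ)⁻¹ := by ring
  rw [hgoal]
  have hBbound : (γ - μ) * B ≤ (γ - μ) * (1 - μ)⁻¹ :=
    mul_le_mul_of_nonneg_left hSμle (by linarith)
  have hAbound : (1 - γ) * A ≤ (1 - γ) * ((1 - γ)⁻¹ - (1 - μ)⁻¹) :=
    mul_le_mul_of_nonneg_left hdiffle h1γ.le
  have hB0 : 0 ≤ B := hS0
  have hinvle : (1 - μ)⁻¹ ≤ (1 - γ)⁻¹ := by
    apply inv_anti₀ h1γ; linarith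
  constructor
  · nlinarith [mul_nonneg hA0 h1γ.le, mul_nonneg (sub_nonneg.mpr hμγ.le) hB0,
      inv_nonneg.mpr h1γ.le]
  · nlinarith [mul_nonneg hA0 h1γ.le, mul_nonneg (sub_nonneg.mpr hμγ.le) hB0,
      inv_nonneg.mpr h1γ.le, inv_nonneg.mpr h1μ.le]

/-- For `0 < μ < γ < 1`, the Gromov–Hausdorff distance between the compact metric spaces
`(C, δ_γ)` and `(C, δ_μ)` is at most `2(γ − μ)/(1 − γ)`. -/
theorem ghDist_cantor_le (γ μ : ℝ) (hμ0 : 0 < μ) (hμγ : μ < γ) (hγ1 : γ < 1)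
    (Mγ Mμ : MetricSpace Cantor)
    (hMγ : ∀ x y : Cantor, Mγ.toPseudoMetricSpace.toDist.dist x y = cantorDist γ x y)
    (hMμ : ∀ x y : Cantor, Mμ.toPseudoMetricSpace.toDist.dist x y = cantorDist μ x y)
    (hcγ : @CompactSpace Cantor Mγ.toPseudoMetricSpace.toUniformSpace.toTopologicalSpace)
    (hcμ : @CompactSpace Cantor Mμ.toPseudoMetricSpace.toUniformSpace.toTopologicalSpace) :
    @GromovHausdorff.ghDist Cantor Cantor Mγ ⟨fun _ => 0⟩ hcγ Mμ ⟨fun _ => 0⟩ hcμ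
      ≤ 2 * (γ - μ) / (1 - γ) := by
  have key := @GromovHausdorff.ghDist_le_of_approx_subsets Cantor Mγ hcγ ⟨fun _ => 0⟩
    Cantor Mμ hcμ ⟨fun _ => 0⟩ (Set.univ : Set Cantor) (fun p => p.1)
    0 (4 * (γ - μ) / (1 - γ)) 0
    (fun x => ⟨x, Set.mem_univ x, by rw [@dist_self Cantor Mγ.toPseudoMetricSpace]⟩)
    (fun x => ⟨⟨x, Set.mem_univ x⟩, by rw [@dist_self Cantor Mμ.toPseudoMetricSpace]⟩)
    (fun p q => by
      simp only [Subtype.dist_eq, hMγ, hMμ]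
      exact cantor_key γ μ hμ0 hμγ hγ1 p.1 q.1)
  calc _ ≤ 0 + 4 * (γ - μ) / (1 - γ) / 2 + 0 := key
    _ = 2 * (γ - μ) / (1 - γ) := by ring
end
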